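/- arXiv:2211.16298 — 2 statements merged into one kernel-verified Lean document; each statement's English description precedes it below -/
import Mathlib

section
/- Let (D, X, Y) satisfy D ∈ {0,1}, E[Y|D,X] = m(D,X), and P(D=1|X) = π₀(X) with π̄ < π₀(X) < 1−π̄ a.s. Let γ(d,x) = d/π(x) − (1−d)/(1−π(x)) for a measurable π with values in (π̄, 1−π̄). If either m = m₀ almost surely or π = π₀ almost surely (where m₀ is the true conditional mean), then E[m(1,X) − m(0,X) + γ(D,X)(Y − m(D,X))] = E[m₀(1,X) − m₀(0,X)]. -/
open MeasureTheory

lemma aipw_integrable_bdd {Ω : Type*} [MeasurableSpace Ω] {μ : Measure Ω}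
    [IsProbabilityMeasure μ] {f : Ω → ℝ} (hf : Measurable f) (C : ℝ)
    (h : ∀ ω, |f ω| ≤ C) : Integrable f μ :=
  ⟨hf.aestronglyMeasurable,
    HasFiniteIntegral.of_bounded (ae_of_all _ fun ω => by
      simpa [Real.norm_eq_abs] using h ω)⟩

lemma aipw_integral_mul_condexp {Ω : Type*} {m m0 : MeasurableSpace Ω}
    (hm : m ≤ m0) {μ : Measure Ω} [IsProbabilityMeasure μ]
    {g f : Ω → ℝ} (hg : StronglyMeasurable[m] g)
    (hgf : Integrable (fun ω => g ω * f ω) μ) (hf : Integrable f μ) :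
    ∫ ω, g ω * f ω ∂μ = ∫ ω, g ω * (μ[f|m]) ω ∂μ := by
  haveI : IsFiniteMeasure (μ.trim hm) := isFiniteMeasure_trim hm
  have h : μ[g * f|m] =ᵐ[μ] g * μ[f|m] :=
    condExp_mul_of_stronglyMeasurable_left hg hgf hf
  have h1 : ∫ ω, g ω * f ω ∂μ = ∫ ω, (μ[g * f|m]) ω ∂μ := by
    rw [integral_condExp hm]
    rfl
  rw [h1, integral_congr_ae h]
  rfl

/-- Double robustness of the AIPW moment function for the ATE: the moment
identifies the ATE if either the outcome regression or the propensity score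
is correctly specified. -/
theorem aipw_double_robustness
    {Ω 𝒳 : Type*} [MeasurableSpace Ω] [MeasurableSpace 𝒳]
    (μ : Measure Ω) [IsProbabilityMeasure μ]
    (D Y : Ω → ℝ) (X : Ω → 𝒳) (m m₀ : ℝ → 𝒳 → ℝ) (π π₀ : 𝒳 → ℝ) (pibar : ℝ)
    (hDmeas : Measurable D) (hXmeas : Measurable X) (hYmeas : Measurable Y)
    (hmmeas : Measurable fun p : ℝ × 𝒳 => m p.1 p.2)
    (hm₀meas : Measurable fun p : ℝ × 𝒳 => m₀ p.1 p.2)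
    (hπmeas : Measurable π) (hπ₀meas : Measurable π₀)
    (hD : ∀ ω, D ω = 0 ∨ D ω = 1) (hY : ∀ ω, Y ω = 0 ∨ Y ω = 1)
    (hcond : μ[Y | MeasurableSpace.comap (fun ω => (D ω, X ω)) inferInstance]
        =ᵐ[μ] fun ω => m₀ (D ω) (X ω))
    (hps : μ[D | MeasurableSpace.comap X inferInstance] =ᵐ[μ] fun ω => π₀ (X ω))
    (hpb : 0 < pibar) (hpb' : pibar < 1 / 2)
    (hover : ∀ᵐ ω ∂μ, pibar < π₀ (X ω) ∧ π₀ (X ω) < 1 - pibar)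
    (hπrange : ∀ x, pibar < π x ∧ π x < 1 - pibar)
    (hmbd : ∀ d x, m d x ∈ Set.Icc (0 : ℝ) 1)
    (hm₀bd : ∀ d x, m₀ d x ∈ Set.Icc (0 : ℝ) 1)
    (hDR : (∀ᵐ ω ∂μ, ∀ d, m d (X ω) = m₀ d (X ω)) ∨
           (∀ᵐ ω ∂μ, π (X ω) = π₀ (X ω))) :
    ∫ ω, (m 1 (X ω) - m 0 (X ω)
        + (D ω / π (X ω) - (1 - D ω) / (1 - π (X ω)))
          * (Y ω - m (D ω) (X ω))) ∂μ
      = ∫ ω, (m₀ 1 (X ω) - m₀ 0 (X ω)) ∂μ := by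
  -- basic facts about π
  have hπpos : ∀ x, 0 < π x := fun x => hpb.trans (hπrange x).1
  have hπlt : ∀ x, 0 < 1 - π x := fun x => by
    have := (hπrange x).2; linarith
  have hπne : ∀ x, π x ≠ 0 := fun x => (hπpos x).ne'
  have hπne' : ∀ x, (1 : ℝ) - π x ≠ 0 := fun x => (hπlt x).ne'
  -- γ and its properties
  set γ : Ω → ℝ := fun ω => D ω / π (X ω) - (1 - D ω) / (1 - π (X ω)) with hγdef
  have hγbd : ∀ ω, |γ ω| ≤ 1 / pibar := by
    intro ω
    have h1 := (hπrange (X ω)).1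
    have h2 := (hπrange (X ω)).2
    rcases hD ω with h | h
    · have hval : γ ω = -(1 / (1 - π (X ω))) := by simp [hγdef, h]
      rw [hval, abs_neg, abs_of_pos (one_div_pos.mpr (hπlt _))]
      exact div_le_div₀ zero_le_one le_rfl hpb (by linarith)
    · have hval : γ ω = 1 / π (X ω) := by simp [hγdef, h]
      rw [hval, abs_of_pos (one_div_pos.mpr (hπpos _))]
      exact div_le_div₀ zero_le_one le_rfl hpb h1.le
  have hDXmeas : Measurable fun ω => (D ω, X ω) := hDmeas.prodMk hXmeas
  have hγmeas : Measurable γ :=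
    ((hDmeas.div (hπmeas.comp hXmeas)).sub
      ((measurable_const.sub hDmeas).div
        (measurable_const.sub (hπmeas.comp hXmeas))))
  -- sub-sigma-algebras
  have hGm : MeasurableSpace.comap (fun ω => (D ω, X ω)) inferInstance
      ≤ ‹MeasurableSpace Ω› := measurable_iff_comap_le.mp hDXmeas
  have hHm : MeasurableSpace.comap X inferInstance ≤ ‹MeasurableSpace Ω› :=
    measurable_iff_comap_le.mp hXmeas
  have hDXG : @Measurable Ω (ℝ × 𝒳)
      (MeasurableSpace.comap (fun ω => (D ω, X ω)) inferInstance) _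
      (fun ω => (D ω, X ω)) := measurable_iff_comap_le.mpr le_rfl
  have hXH : @Measurable Ω 𝒳 (MeasurableSpace.comap X inferInstance) _ X :=
    measurable_iff_comap_le.mpr le_rfl
  have hγG : StronglyMeasurable[MeasurableSpace.comap
      (fun ω => (D ω, X ω)) inferInstance] γ := by
    have hF : Measurable fun p : ℝ × 𝒳 => p.1 / π p.2 - (1 - p.1) / (1 - π p.2) :=
      (measurable_fst.div (hπmeas.comp measurable_snd)).sub
        ((measurable_const.sub measurable_fst).div
          (measurable_const.sub (hπmeas.comp measurable_snd)))
    exact (hF.comp hDXG).stronglyMeasurable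
  -- measurability of section functions
  have hsec : ∀ (g : ℝ → 𝒳 → ℝ), (Measurable fun p : ℝ × 𝒳 => g p.1 p.2) →
      ∀ d : ℝ, Measurable fun x => g d x := fun g hg d =>
    hg.comp (measurable_const.prodMk measurable_id)
  have hYbd : ∀ ω, |Y ω| ≤ 1 := fun ω => by
    rcases hY ω with h | h <;> rw [h] <;> norm_num
  -- integrability facts
  have intY : Integrable Y μ := aipw_integrable_bdd hYmeas 1 hYbd
  have intγY : Integrable (fun ω => γ ω * Y ω) μ :=
    aipw_integrable_bdd (hγmeas.mul hYmeas) (1 / pibar) fun ω => by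
      rw [abs_mul]
      calc |γ ω| * |Y ω| ≤ (1 / pibar) * 1 :=
        mul_le_mul (hγbd ω) (hYbd ω) (abs_nonneg _) (by positivity)
      _ = 1 / pibar := by ring
  have intγm : ∀ (g : ℝ → 𝒳 → ℝ), (Measurable fun p : ℝ × 𝒳 => g p.1 p.2) →
      (∀ d x, g d x ∈ Set.Icc (0 : ℝ) 1) →
      Integrable (fun ω => γ ω * g (D ω) (X ω)) μ := by
    intro g hg hgbd
    refine aipw_integrable_bdd (hγmeas.mul (hg.comp hDXmeas)) (1 / pibar) fun ω => ?_
    rw [abs_mul]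
    have hb : |g (D ω) (X ω)| ≤ 1 := by
      have := hgbd (D ω) (X ω); rw [abs_le]; constructor <;> linarith [this.1, this.2]
    calc |γ ω| * |g (D ω) (X ω)| ≤ (1 / pibar) * 1 :=
      mul_le_mul (hγbd ω) hb (abs_nonneg _) (by positivity)
    _ = 1 / pibar := by ring
  have intmm : ∀ (g : ℝ → 𝒳 → ℝ), (Measurable fun p : ℝ × 𝒳 => g p.1 p.2) →
      (∀ d x, g d x ∈ Set.Icc (0 : ℝ) 1) →
      Integrable (fun ω => g 1 (X ω) - g 0 (X ω)) μ := by
    intro g hg hgbd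
    refine aipw_integrable_bdd (((hsec g hg 1).comp hXmeas).sub
      ((hsec g hg 0).comp hXmeas)) 2 fun ω => ?_
    have h1 := hgbd 1 (X ω); have h0 := hgbd 0 (X ω)
    rw [abs_le]; constructor
    · linarith [h1.1, h0.2]
    · linarith [h1.2, h0.1]
  -- Step A: replace Y by m₀(D,X)
  have hA : ∫ ω, γ ω * Y ω ∂μ = ∫ ω, γ ω * m₀ (D ω) (X ω) ∂μ := by
    rw [aipw_integral_mul_condexp hGm hγG intγY intY]
    refine integral_congr_ae ?_
    filter_upwards [hcond] with ω h
    rw [h]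
  -- split the LHS integral
  have hsplit : ∫ ω, (m 1 (X ω) - m 0 (X ω)
        + (D ω / π (X ω) - (1 - D ω) / (1 - π (X ω))) * (Y ω - m (D ω) (X ω))) ∂μ
      = ∫ ω, (m 1 (X ω) - m 0 (X ω)) ∂μ
        + (∫ ω, γ ω * Y ω ∂μ - ∫ ω, γ ω * m (D ω) (X ω) ∂μ) := by
    rw [show (fun ω => m 1 (X ω) - m 0 (X ω)
        + (D ω / π (X ω) - (1 - D ω) / (1 - π (X ω))) * (Y ω - m (D ω) (X ω)))
        = fun ω => (m 1 (X ω) - m 0 (X ω)) + (γ ω * Y ω - γ ω * m (D ω) (X ω))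
        from funext fun ω => by simp only [hγdef]; ring]
    have hint2 : Integrable (fun ω => γ ω * Y ω - γ ω * m (D ω) (X ω)) μ :=
      intγY.sub (intγm m hmmeas hmbd)
    rw [integral_add (intmm m hmmeas hmbd) hint2,
      integral_sub intγY (intγm m hmmeas hmbd)]
  rw [hsplit, hA]
  -- case analysis
  rcases hDR with hcase | hcase
  · -- outcome regression correct
    have h1 : ∫ ω, γ ω * m (D ω) (X ω) ∂μ = ∫ ω, γ ω * m₀ (D ω) (X ω) ∂μ := by
      refine integral_congr_ae ?_
      filter_upwards [hcase] with ω h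
      rw [h (D ω)]
    have h2 : ∫ ω, (m 1 (X ω) - m 0 (X ω)) ∂μ
        = ∫ ω, (m₀ 1 (X ω) - m₀ 0 (X ω)) ∂μ := by
      refine integral_congr_ae ?_
      filter_upwards [hcase] with ω h
      rw [h 1, h 0]
    rw [h1, h2]; ring
  · -- propensity score correct
    have hDmul : ∀ (h : 𝒳 → ℝ) (C : ℝ), Measurable h → (∀ x, |h x| ≤ C) → 0 ≤ C →
        ∫ ω, h (X ω) * D ω ∂μ = ∫ ω, h (X ω) * π (X ω) ∂μ := by
      intro h C hh hbd hC
      have intD : Integrable D μ := aipw_integrable_bdd hDmeas 1 fun ω => by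
        rcases hD ω with h' | h' <;> rw [h'] <;> norm_num
      have inthD : Integrable (fun ω => h (X ω) * D ω) μ :=
        aipw_integrable_bdd ((hh.comp hXmeas).mul hDmeas) C fun ω => by
          rw [abs_mul]
          calc |h (X ω)| * |D ω| ≤ C * 1 := by
                refine mul_le_mul (hbd _) ?_ (abs_nonneg _) hC
                rcases hD ω with h' | h' <;> rw [h'] <;> norm_num
          _ = C := by ring
      have hhX : StronglyMeasurable[MeasurableSpace.comap X inferInstance]
          fun ω => h (X ω) := (hh.comp hXH).stronglyMeasurable
      rw [aipw_integral_mul_condexp hHm hhX inthD intD]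
      refine integral_congr_ae ?_
      filter_upwards [hps, hcase] with ω h1 h2
      rw [h1, h2]
    -- key identity for bounded g
    have hB : ∀ (g : ℝ → 𝒳 → ℝ), (Measurable fun p : ℝ × 𝒳 => g p.1 p.2) →
        (∀ d x, g d x ∈ Set.Icc (0 : ℝ) 1) →
        ∫ ω, γ ω * g (D ω) (X ω) ∂μ = ∫ ω, (g 1 (X ω) - g 0 (X ω)) ∂μ := by
      intro g hg hgbd
      set h₂ : 𝒳 → ℝ := fun x => g 0 x / (1 - π x) with hh₂def
      set Hf : 𝒳 → ℝ := fun x => g 1 x / π x + h₂ x with hHfdef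
      have hh₂meas : Measurable h₂ :=
        (hsec g hg 0).div (measurable_const.sub hπmeas)
      have hHfmeas : Measurable Hf :=
        ((hsec g hg 1).div hπmeas).add hh₂meas
      have habs : ∀ (d : ℝ) (x : 𝒳) (q : ℝ), pibar ≤ q → |g d x / q| ≤ 1 / pibar := by
        intro d x q hq
        rw [abs_div]
        have := hgbd d x
        refine div_le_div₀ zero_le_one ?_ hpb ?_
        · rw [abs_le]; constructor <;> linarith [this.1, this.2]
        · rw [le_abs]; left; exact hq
      have hh₂bd : ∀ x, |h₂ x| ≤ 1 / pibar := fun x =>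
        habs 0 x _ (by linarith [(hπrange x).2])
      have hHfbd : ∀ x, |Hf x| ≤ 2 / pibar := fun x => by
        calc |Hf x| ≤ |g 1 x / π x| + |h₂ x| := abs_add_le _ _
        _ ≤ 1 / pibar + 1 / pibar :=
            add_le_add (habs 1 x _ (by linarith [(hπrange x).1])) (hh₂bd x)
        _ = 2 / pibar := by ring
      have key : ∀ ω, γ ω * g (D ω) (X ω) = Hf (X ω) * D ω - h₂ (X ω) := by
        intro ω
        have hne := hπne (X ω); have hne' := hπne' (X ω)
        rcases hD ω with h | h <;>
          simp only [hγdef, hHfdef, hh₂def, h] <;> field_simp <;> ring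
      have inth₂ : Integrable (fun ω => h₂ (X ω)) μ :=
        aipw_integrable_bdd (hh₂meas.comp hXmeas) (1 / pibar) fun ω => hh₂bd _
      have intHD : Integrable (fun ω => Hf (X ω) * D ω) μ :=
        aipw_integrable_bdd ((hHfmeas.comp hXmeas).mul hDmeas) (2 / pibar) fun ω => by
          rw [abs_mul]
          calc |Hf (X ω)| * |D ω| ≤ (2 / pibar) * 1 := by
                refine mul_le_mul (hHfbd _) ?_ (abs_nonneg _) (by positivity)
                rcases hD ω with h' | h' <;> rw [h'] <;> norm_num
          _ = 2 / pibar := by ring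
      have intHπ : Integrable (fun ω => Hf (X ω) * π (X ω)) μ :=
        aipw_integrable_bdd ((hHfmeas.comp hXmeas).mul (hπmeas.comp hXmeas))
          (2 / pibar) fun ω => by
          rw [abs_mul]
          calc |Hf (X ω)| * |π (X ω)| ≤ (2 / pibar) * 1 := by
                refine mul_le_mul (hHfbd _) ?_ (abs_nonneg _) (by positivity)
                rw [abs_of_pos (hπpos _)]; linarith [(hπrange (X ω)).2]
          _ = 2 / pibar := by ring
      calc ∫ ω, γ ω * g (D ω) (X ω) ∂μ
          = ∫ ω, (Hf (X ω) * D ω - h₂ (X ω)) ∂μ :=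
            integral_congr_ae (ae_of_all _ fun ω => key ω)
        _ = ∫ ω, Hf (X ω) * D ω ∂μ - ∫ ω, h₂ (X ω) ∂μ := integral_sub intHD inth₂
        _ = ∫ ω, Hf (X ω) * π (X ω) ∂μ - ∫ ω, h₂ (X ω) ∂μ := by
            rw [hDmul Hf (2 / pibar) hHfmeas hHfbd (by positivity)]
        _ = ∫ ω, (Hf (X ω) * π (X ω) - h₂ (X ω)) ∂μ := (integral_sub intHπ inth₂).symm
        _ = ∫ ω, (g 1 (X ω) - g 0 (X ω)) ∂μ := by
            refine integral_congr_ae (ae_of_all _ fun ω => ?_)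
            have hne := hπne (X ω); have hne' := hπne' (X ω)
            simp only [hHfdef, hh₂def]
            field_simp
            ring
    rw [hB m hmmeas hmbd, hB m₀ hm₀meas hm₀bd]
    ring
end

section
/- Let π, π̂ : 𝒳 → (π̄, 1−π̄), m, m₀ : {0,1} × 𝒳 → [0,1] be measurable, γ̂(d,x) = d/π̂(x) − (1−d)/(1−π̂(x)), γ₀ defined analogously from π₀, and let X have distribution F₀. Then |E[(γ̂ − γ₀)(D,X)(m − m₀)(D,X)]| ≤ (2/π̄²)·‖π̂ − π₀‖_{L²(F₀)} · (‖m(1,·) − m₀(1,·)‖_{L²(F₀)} + ‖m(0,·) − m₀(0,·)‖_{L²(F₀)}), where D ∈ {0,1} has P(D=1|X) = π₀(X). -/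
/-!
Since `D ∈ {0, 1}`, the integrand only sees one treatment arm at a time, and on that arm the
weight difference is a difference of reciprocals of numbers larger than `π̄`, hence at most
`|π̂ - π₀| / π̄²` in absolute value. Integrating this pointwise bound and applying Cauchy–Schwarz
in `L²(μ)` to each arm gives the claim.
-/

open MeasureTheory

theorem abs_inv_sub_inv_le_abs_sub_div_sq {b p q : ℝ} (hb : 0 < b) (hp : b ≤ p) (hq : b ≤ q) :
    |p⁻¹ - q⁻¹| ≤ |p - q| / b ^ 2 := by
  have hp0 : 0 < p := hb.trans_le hp
  have hq0 : 0 < q := hb.trans_le hq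
  rw [inv_sub_inv hp0.ne' hq0.ne', abs_div, abs_of_pos (mul_pos hp0 hq0), abs_sub_comm]
  gcongr
  nlinarith

/-- The paper's weight `γ(d, x)` evaluated at `p = π(x)`. -/
noncomputable def ipwWeight (p d : ℝ) : ℝ := d / p - (1 - d) / (1 - p)

theorem abs_ipwWeight_sub_mul_le {b p q d : ℝ} (f : ℝ → ℝ) (hb : 0 < b)
    (hp : b < p ∧ p < 1 - b) (hq : b < q ∧ q < 1 - b) (hd : d = 0 ∨ d = 1) :
    |(ipwWeight p d - ipwWeight q d) * f d| ≤ |p - q| * (|f 1| + |f 0|) / b ^ 2 := by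
  rcases hd with rfl | rfl
  · have h := abs_inv_sub_inv_le_abs_sub_div_sq (p := 1 - q) (q := 1 - p) hb
      (by linarith) (by linarith)
    rw [show (1 - q) - (1 - p) = p - q by ring] at h
    calc _ = |(1 - q)⁻¹ - (1 - p)⁻¹| * |f 0| := by
          rw [abs_mul]; congr 2; simp only [ipwWeight]; ring
      _ ≤ |p - q| / b ^ 2 * |f 0| := by gcongr
      _ ≤ |p - q| * (|f 1| + |f 0|) / b ^ 2 := by
        rw [div_mul_eq_mul_div]; gcongr; linarith [abs_nonneg (f 1)]
  · have h := abs_inv_sub_inv_le_abs_sub_div_sq hb hp.1.le hq.1.le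
    calc _ = |p⁻¹ - q⁻¹| * |f 1| := by
          rw [abs_mul]; congr 2; simp only [ipwWeight]; ring
      _ ≤ |p - q| / b ^ 2 * |f 1| := by gcongr
      _ ≤ |p - q| * (|f 1| + |f 0|) / b ^ 2 := by
        rw [div_mul_eq_mul_div]; gcongr; linarith [abs_nonneg (f 0)]

theorem integral_abs_mul_abs_le_sqrt_mul_sqrt {α : Type*} [MeasurableSpace α] {μ : Measure α}
    {f g : α → ℝ} (hf : MemLp f 2 μ) (hg : MemLp g 2 μ) :
    ∫ a, |f a| * |g a| ∂μ ≤ √(∫ a, f a ^ 2 ∂μ) * √(∫ a, g a ^ 2 ∂μ) := by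
  have h := integral_mul_norm_le_Lp_mul_Lq Real.HolderConjugate.two_two
    (by rwa [ENNReal.ofReal_ofNat] : MemLp f (ENNReal.ofReal 2) μ)
    (by rwa [ENNReal.ofReal_ofNat] : MemLp g (ENNReal.ofReal 2) μ)
  simpa only [Real.norm_eq_abs, Real.rpow_two, sq_abs, ← Real.sqrt_eq_rpow] using h

theorem cauchy_schwarz_product_bound_general
    {Ω 𝒳 : Type*} [MeasurableSpace Ω] [MeasurableSpace 𝒳]
    (μ : Measure Ω) [IsProbabilityMeasure μ]
    (D : Ω → ℝ) (X : Ω → 𝒳) (πhat π₀ : 𝒳 → ℝ) (m m₀ : ℝ → 𝒳 → ℝ) (pibar : ℝ)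
    (hXmeas : Measurable X)
    (hπhatmeas : Measurable πhat) (hπ₀meas : Measurable π₀)
    (hmmeas : Measurable fun p : ℝ × 𝒳 => m p.1 p.2)
    (hm₀meas : Measurable fun p : ℝ × 𝒳 => m₀ p.1 p.2)
    (hpb : 0 < pibar)
    (hπhat : ∀ x, pibar < πhat x ∧ πhat x < 1 - pibar)
    (hπ₀ : ∀ x, pibar < π₀ x ∧ π₀ x < 1 - pibar)
    (hm : ∀ d x, m d x ∈ Set.Icc (0 : ℝ) 1)
    (hm₀ : ∀ d x, m₀ d x ∈ Set.Icc (0 : ℝ) 1)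
    (hD : ∀ ω, D ω = 0 ∨ D ω = 1) :
    |∫ ω, ((D ω / πhat (X ω) - (1 - D ω) / (1 - πhat (X ω)))
          - (D ω / π₀ (X ω) - (1 - D ω) / (1 - π₀ (X ω))))
        * (m (D ω) (X ω) - m₀ (D ω) (X ω)) ∂μ|
      ≤ 2 / pibar ^ 2
        * Real.sqrt (∫ ω, (πhat (X ω) - π₀ (X ω)) ^ 2 ∂μ)
        * (Real.sqrt (∫ ω, (m 1 (X ω) - m₀ 1 (X ω)) ^ 2 ∂μ)
          + Real.sqrt (∫ ω, (m 0 (X ω) - m₀ 0 (X ω)) ^ 2 ∂μ)) := by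
  have memLp_comp (f : 𝒳 → ℝ) (hf : Measurable f) (h1 : ∀ x, |f x| ≤ 1) :
      MemLp (fun ω => f (X ω)) 2 μ :=
    .of_bound (hf.comp hXmeas).aestronglyMeasurable 1 (ae_of_all _ fun ω => h1 (X ω))
  have abs_le_one_of_mem_Icc {t : ℝ} (ht : t ∈ Set.Icc (0 : ℝ) 1) : |t| ≤ 1 :=
    abs_le.2 ⟨by linarith [ht.1], ht.2⟩
  have hπ : MemLp (fun ω => πhat (X ω) - π₀ (X ω)) 2 μ :=
    (memLp_comp _ hπhatmeas fun x => abs_le.2 ⟨by linarith [hπhat x], by linarith [hπhat x]⟩).sub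
      (memLp_comp _ hπ₀meas fun x => abs_le.2 ⟨by linarith [hπ₀ x], by linarith [hπ₀ x]⟩)
  have hmd (d : ℝ) : MemLp (fun ω => m d (X ω) - m₀ d (X ω)) 2 μ :=
    (memLp_comp _ (hmmeas.comp measurable_prodMk_left) fun x => abs_le_one_of_mem_Icc (hm d x)).sub
      (memLp_comp _ (hm₀meas.comp measurable_prodMk_left) fun x => abs_le_one_of_mem_Icc (hm₀ d x))
  have hint (d : ℝ) :
      Integrable (fun ω => |πhat (X ω) - π₀ (X ω)| * |m d (X ω) - m₀ d (X ω)|) μ :=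
    hπ.abs.integrable_mul (hmd d).abs
  set A := √(∫ ω, (πhat (X ω) - π₀ (X ω)) ^ 2 ∂μ)
  set E₁ := √(∫ ω, (m 1 (X ω) - m₀ 1 (X ω)) ^ 2 ∂μ)
  set E₀ := √(∫ ω, (m 0 (X ω) - m₀ 0 (X ω)) ^ 2 ∂μ)
  calc _ ≤ ∫ ω, |πhat (X ω) - π₀ (X ω)|
            * (|m 1 (X ω) - m₀ 1 (X ω)| + |m 0 (X ω) - m₀ 0 (X ω)|) / pibar ^ 2 ∂μ :=
        abs_integral_le_integral_abs.trans <| integral_mono_of_nonneg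
          (ae_of_all _ fun ω => abs_nonneg _)
          (by simpa only [mul_add, Pi.add_apply] using ((hint 1).add (hint 0)).div_const _)
          (ae_of_all _ fun ω => abs_ipwWeight_sub_mul_le (fun d => m d (X ω) - m₀ d (X ω))
            hpb (hπhat (X ω)) (hπ₀ (X ω)) (hD ω))
    _ = ((∫ ω, |πhat (X ω) - π₀ (X ω)| * |m 1 (X ω) - m₀ 1 (X ω)| ∂μ)
          + ∫ ω, |πhat (X ω) - π₀ (X ω)| * |m 0 (X ω) - m₀ 0 (X ω)| ∂μ) / pibar ^ 2 := by
        simp only [mul_add]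
        rw [integral_div, integral_add (hint 1) (hint 0)]
    _ ≤ (A * E₁ + A * E₀) / pibar ^ 2 := by
        gcongr <;> exact integral_abs_mul_abs_le_sqrt_mul_sqrt hπ (hmd _)
    _ ≤ 2 / pibar ^ 2 * A * (E₁ + E₀) := by
        rw [← mul_add, mul_assoc, div_mul_eq_mul_div]
        exact div_le_div_of_nonneg_right (le_mul_of_one_le_left (by positivity) one_le_two)
          (by positivity)

/-- Cauchy–Schwarz product bound: the population bias is controlled by the
product of the propensity score error and the conditional mean error in
`L²(F₀)`. -/
theorem cauchy_schwarz_product_bound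
    {Ω 𝒳 : Type*} [MeasurableSpace Ω] [MeasurableSpace 𝒳]
    (μ : Measure Ω) [IsProbabilityMeasure μ]
    (D : Ω → ℝ) (X : Ω → 𝒳) (πhat π₀ : 𝒳 → ℝ) (m m₀ : ℝ → 𝒳 → ℝ) (pibar : ℝ)
    (hDmeas : Measurable D) (hXmeas : Measurable X)
    (hπhatmeas : Measurable πhat) (hπ₀meas : Measurable π₀)
    (hmmeas : Measurable fun p : ℝ × 𝒳 => m p.1 p.2)
    (hm₀meas : Measurable fun p : ℝ × 𝒳 => m₀ p.1 p.2)
    (hpb : 0 < pibar) (hpb' : pibar < 1 / 2)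
    (hπhat : ∀ x, pibar < πhat x ∧ πhat x < 1 - pibar)
    (hπ₀ : ∀ x, pibar < π₀ x ∧ π₀ x < 1 - pibar)
    (hm : ∀ d x, m d x ∈ Set.Icc (0 : ℝ) 1)
    (hm₀ : ∀ d x, m₀ d x ∈ Set.Icc (0 : ℝ) 1)
    (hD : ∀ ω, D ω = 0 ∨ D ω = 1)
    (hps : μ[D | MeasurableSpace.comap X inferInstance] =ᵐ[μ] fun ω => π₀ (X ω)) :
    |∫ ω, ((D ω / πhat (X ω) - (1 - D ω) / (1 - πhat (X ω)))
          - (D ω / π₀ (X ω) - (1 - D ω) / (1 - π₀ (X ω))))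
        * (m (D ω) (X ω) - m₀ (D ω) (X ω)) ∂μ|
      ≤ 2 / pibar ^ 2
        * Real.sqrt (∫ ω, (πhat (X ω) - π₀ (X ω)) ^ 2 ∂μ)
        * (Real.sqrt (∫ ω, (m 1 (X ω) - m₀ 1 (X ω)) ^ 2 ∂μ)
          + Real.sqrt (∫ ω, (m 0 (X ω) - m₀ 0 (X ω)) ^ 2 ∂μ)) :=
  cauchy_schwarz_product_bound_general μ D X πhat π₀ m m₀ pibar hXmeas hπhatmeas hπ₀meas hmmeas
    hm₀meas hpb hπhat hπ₀ hm hm₀ hD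
end
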